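/- Greedy bag-filling correctness (condition set 2): Let v be an additive valuation over M, let B_1,...,B_n be disjoint bundles with v(B_k) ≤ 1 − ε/2 for all k, let the remaining items each satisfy |v(j)| < ε/2, and suppose v(M) ≥ n(1 − ε/2). Then the bag-filling procedure (for k = 1,...,n−1: while v(B_k) < 1 − ε add the minimum-valued unallocated small item to B_k; then give all remaining items to B_n) produces a partition A_1,...,A_n of M with v(A_k) ≥ 1 − ε for all k. -/

import Mathlib

open Finset
open scoped Classical

/-- `A` is a partition of the item set `M` into `n` (possibly empty) bundles. -/
def IsPartition {ι : Type*} [DecidableEq ι] (M : Finset ι) (n : ℕ)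
    (A : Fin n → Finset ι) : Prop :=
  (∀ k, A k ⊆ M) ∧ (∀ k l, k ≠ l → Disjoint (A k) (A l)) ∧ (∀ j ∈ M, ∃ k, j ∈ A k)

/-- `μ` is the maximin share of the additive valuation `v` over `M` with `n` bundles:
some partition attains minimum bundle value at least `μ`, and every partition has a
bundle of value at most `μ`. -/
def IsMMS {ι : Type*} [DecidableEq ι] (v : ι → ℝ) (M : Finset ι) (n : ℕ) (μ : ℝ) : Prop :=
  (∃ A : Fin n → Finset ι, IsPartition M n A ∧ ∀ k, μ ≤ ∑ j ∈ A k, v j) ∧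
  (∀ A : Fin n → Finset ι, IsPartition M n A → ∃ k, ∑ j ∈ A k, v j ≤ μ)

/-!
With `a = 1 - ε` and `b = 1 - ε / 2`, fill the bags one at a time. While a bag is worth less
than `a`, adding a pool item worth at most `b - a` keeps it at most `b`, so it stops inside
`[a, b]`. The pool for the first bag is everything outside the other bags, worth at least
`(n + 1) b - n b = b ≥ a`, so the filling terminates; the filled bag takes at most `b`, so the
rest still has value at least `n b` and the argument recurses, the last bag receiving all
remaining items.
-/

section

variable {ι : Type*} [DecidableEq ι]

theorem IsPartition.cons {M A₀ : Finset ι} {n : ℕ} {A : Fin n → Finset ι} (h₀ : A₀ ⊆ M)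
    (hA : IsPartition (M \ A₀) n A) :
    IsPartition M (n + 1) (Fin.cons A₀ A : Fin (n + 1) → Finset ι) := by
  obtain ⟨hsub, hdisj, hcover⟩ := hA
  have hdisj₀ (k : Fin n) : Disjoint A₀ (A k) :=
    disjoint_of_subset_right (hsub k) disjoint_sdiff
  refine ⟨Fin.cases h₀ fun k => (hsub k).trans sdiff_subset, fun k l hkl => ?_, fun j hj => ?_⟩
  · induction k using Fin.cases <;> induction l using Fin.cases
    · exact absurd rfl hkl
    · exact hdisj₀ _
    · exact (hdisj₀ _).symm
    · exact hdisj _ _ fun h => hkl (congrArg Fin.succ h)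
  · by_cases hj₀ : j ∈ A₀
    · exact ⟨0, hj₀⟩
    · obtain ⟨k, hk⟩ := hcover j (mem_sdiff.2 ⟨hj, hj₀⟩)
      exact ⟨k.succ, by simpa using hk⟩

theorem exists_subset_union_sum_mem_Icc {f : ι → ℝ} {a b : ℝ} {S T : Finset ι}
    (hST : Disjoint S T) (hT : ∀ j ∈ T, f j ≤ b - a) (hS : ∑ j ∈ S, f j ≤ b)
    (hsum : a ≤ ∑ j ∈ S, f j + ∑ j ∈ T, f j) :
    ∃ S', S ⊆ S' ∧ S' ⊆ S ∪ T ∧ a ≤ ∑ j ∈ S', f j ∧ ∑ j ∈ S', f j ≤ b := by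
  induction T using Finset.induction_on generalizing S with
  | empty => exact ⟨S, subset_rfl, subset_union_left, by simpa using hsum, hS⟩
  | insert t T ht ih =>
    by_cases hSa : a ≤ ∑ j ∈ S, f j
    · exact ⟨S, subset_rfl, subset_union_left, hSa, hS⟩
    have htS : t ∉ S := disjoint_right.1 hST (mem_insert_self t T)
    have hft := hT t (mem_insert_self t T)
    rw [sum_insert ht] at hsum
    obtain ⟨S', hSS', hS'T, hS'⟩ := ih (S := insert t S)
      (disjoint_insert_left.2 ⟨ht, hST.mono_right (subset_insert t T)⟩)
      (fun j hj => hT j (mem_insert_of_mem hj))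
      (by rw [sum_insert htS]; linarith) (by rw [sum_insert htS]; linarith)
    refine ⟨S', (subset_insert t S).trans hSS', hS'T.trans ?_, hS'⟩
    rw [insert_union, union_insert]

theorem exists_fill_first_bag {v : ι → ℝ} {a b : ℝ} (hab : a ≤ b) {n : ℕ} {M : Finset ι}
    {B : Fin (n + 2) → Finset ι} (hBsub : ∀ k, B k ⊆ M)
    (hBdisj : ∀ k l, k ≠ l → Disjoint (B k) (B l)) (hBval : ∀ k, ∑ j ∈ B k, v j ≤ b)
    (hsmall : ∀ j ∈ M, (∀ k, j ∉ B k) → v j ≤ b - a)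
    (htot : ((n + 2 : ℕ) : ℝ) * b ≤ ∑ j ∈ M, v j) :
    ∃ A₀, B 0 ⊆ A₀ ∧ A₀ ⊆ M ∧ (∀ k : Fin (n + 1), Disjoint A₀ (B k.succ)) ∧
      a ≤ ∑ j ∈ A₀, v j ∧ ∑ j ∈ A₀, v j ≤ b := by
  set W := univ.biUnion fun k : Fin (n + 1) => B k.succ
  have hWM : W ⊆ M := biUnion_subset.2 fun k _ => hBsub k.succ
  have hW : ∑ j ∈ W, v j ≤ (n + 1) * b := by
    rw [sum_biUnion fun k _ l _ hkl => hBdisj _ _ ((Fin.succ_injective _).ne hkl)]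
    simpa using sum_le_sum fun (k : Fin (n + 1)) (_ : k ∈ univ) => hBval k.succ
  have hB₀ : B 0 ⊆ M \ W := subset_sdiff.2 ⟨hBsub 0, (disjoint_biUnion_right _ _ _).2
    fun (k : Fin (n + 1)) _ => hBdisj 0 k.succ (Fin.succ_ne_zero k).symm⟩
  have hpool : ∀ j ∈ (M \ W) \ B 0, v j ≤ b - a := by
    intro j hj
    simp only [mem_sdiff] at hj
    refine hsmall j hj.1.1 (Fin.cases hj.2 fun k hk => hj.1.2 ?_)
    exact mem_biUnion.2 ⟨k, mem_univ k, hk⟩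
  have hsum : a ≤ ∑ j ∈ B 0, v j + ∑ j ∈ (M \ W) \ B 0, v j := by
    have h₁ := sum_sdiff (f := v) hB₀
    have h₂ := sum_sdiff (f := v) hWM
    push_cast at htot
    linarith
  obtain ⟨A₀, hBA₀, hA₀, hval⟩ :=
    exists_subset_union_sum_mem_Icc disjoint_sdiff hpool (hBval 0) hsum
  rw [union_sdiff_of_subset hB₀] at hA₀
  refine ⟨A₀, hBA₀, hA₀.trans sdiff_subset, fun k => ?_, hval⟩
  exact disjoint_of_subset_left hA₀ (disjoint_sdiff_self_left.mono_right
    (subset_biUnion_of_mem (fun k : Fin (n + 1) => B k.succ) (mem_univ k)))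

theorem exists_partition_extending_bags {v : ι → ℝ} {a b : ℝ} (hab : a ≤ b) (n : ℕ)
    (M : Finset ι) (B : Fin (n + 1) → Finset ι) (hBsub : ∀ k, B k ⊆ M)
    (hBdisj : ∀ k l, k ≠ l → Disjoint (B k) (B l)) (hBval : ∀ k, ∑ j ∈ B k, v j ≤ b)
    (hsmall : ∀ j ∈ M, (∀ k, j ∉ B k) → v j ≤ b - a)
    (htot : ((n + 1 : ℕ) : ℝ) * b ≤ ∑ j ∈ M, v j) :
    ∃ A : Fin (n + 1) → Finset ι, IsPartition M (n + 1) A ∧ (∀ k, B k ⊆ A k) ∧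
      ∀ k, a ≤ ∑ j ∈ A k, v j := by
  induction n generalizing M with
  | zero =>
    refine ⟨fun _ => M, ⟨fun _ => subset_rfl,
      fun k l hkl => absurd (Subsingleton.elim (α := Fin 1) k l) hkl, fun j hj => ⟨0, hj⟩⟩,
      hBsub, fun _ => ?_⟩
    norm_num at htot
    linarith
  | succ n ih =>
    obtain ⟨A₀, hBA₀, hA₀M, hA₀B, hlo, hhi⟩ :=
      exists_fill_first_bag hab hBsub hBdisj hBval hsmall htot
    have hrest : ((n + 1 : ℕ) : ℝ) * b ≤ ∑ j ∈ M \ A₀, v j := by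
      have := sum_sdiff (f := v) hA₀M
      push_cast at htot ⊢
      linarith
    obtain ⟨A, hA, hBA, hAval⟩ := ih (M \ A₀) (fun k => B k.succ)
      (fun k => subset_sdiff.2 ⟨hBsub _, (hA₀B k).symm⟩)
      (fun k l hkl => hBdisj _ _ ((Fin.succ_injective _).ne hkl)) (fun k => hBval _)
      (fun j hj hjB => hsmall j (mem_sdiff.1 hj).1
        (Fin.cases (fun h => (mem_sdiff.1 hj).2 (hBA₀ h)) hjB)) hrest
    exact ⟨Fin.cons A₀ A, hA.cons hA₀M, Fin.cases hBA₀ hBA, Fin.cases hlo hAval⟩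

end

theorem bag_filling_cond2_general {ι : Type*} [DecidableEq ι] (v : ι → ℝ) (M : Finset ι)
    (n : ℕ) (hn : 1 ≤ n) (ε : ℝ) (hε : 0 < ε)
    (B : Fin n → Finset ι) (hBsub : ∀ k, B k ⊆ M)
    (hBdisj : ∀ k l, k ≠ l → Disjoint (B k) (B l))
    (hBval : ∀ k, ∑ j ∈ B k, v j ≤ 1 - ε / 2)
    (hsmall : ∀ j ∈ M, (∀ k, j ∉ B k) → |v j| < ε / 2)
    (htot : (n : ℝ) * (1 - ε / 2) ≤ ∑ j ∈ M, v j) :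
    ∃ A : Fin n → Finset ι, IsPartition M n A ∧ (∀ k, B k ⊆ A k) ∧
      (∀ k, 1 - ε ≤ ∑ j ∈ A k, v j) := by
  obtain ⟨m, rfl⟩ := Nat.exists_eq_add_of_le' hn
  exact exists_partition_extending_bags (by linarith) m M B hBsub hBdisj hBval
    (fun j hj hjB => by linarith [(abs_lt.1 (hsmall j hj hjB)).2]) htot

/-- Bag-filling correctness (condition set 2): if `v(M) ≥ n(1 - ε/2)`, the disjoint
initial bags `B k ⊆ M` each have value at most `1 - ε/2`, and all remaining (small)
items satisfy `|v j| < ε/2`, then there is a partition `A` of `M` extending the bags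
with every bundle of value at least `1 - ε`. -/
theorem bag_filling_cond2 {ι : Type*} [DecidableEq ι] (v : ι → ℝ) (M : Finset ι)
    (n : ℕ) (hn : 1 ≤ n) (ε : ℝ) (hε : 0 < ε) (hε1 : ε < 1)
    (B : Fin n → Finset ι) (hBsub : ∀ k, B k ⊆ M)
    (hBdisj : ∀ k l, k ≠ l → Disjoint (B k) (B l))
    (hBval : ∀ k, ∑ j ∈ B k, v j ≤ 1 - ε / 2)
    (hsmall : ∀ j ∈ M, (∀ k, j ∉ B k) → |v j| < ε / 2)
    (htot : (n : ℝ) * (1 - ε / 2) ≤ ∑ j ∈ M, v j) :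
    ∃ A : Fin n → Finset ι, IsPartition M n A ∧ (∀ k, B k ⊆ A k) ∧
      (∀ k, 1 - ε ≤ ∑ j ∈ A k, v j) :=
  bag_filling_cond2_general v M n hn ε hε B hBsub hBdisj hBval hsmall htot
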